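/- Let 0 ≤ α < n and let Φ, Ψ be Young functions such that the fractional maximal operator M_α is bounded from L_Φ(ℝⁿ) to WL_Ψ(ℝⁿ), i.e. there is A > 0 with ‖M_α g‖_{WL_Ψ(ℝⁿ)} ≤ A‖g‖_{L_Φ(ℝⁿ)} for all g (by Cianchi's theorem this is equivalent to Φ dominating globally the Young function Q with Q⁻¹(r) = r^{α/n}Ψ⁻¹(r)). Then there exists C > 0, independent of x, r and f, such that for every ball B = B(x,r) and every locally integrable f: ‖M_α f‖_{WL_Ψ(B(x,r))} ≤ C ( ‖f‖_{L_Φ(B(x,2r))} + Ψ⁻¹(r⁻ⁿ)⁻¹ · sup_{t>2r} t^{α−n} ∫_{B(x,t)} |f(z)| dz ). -/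

import Mathlib

open MeasureTheory Metric Set NNReal ENNReal Filter

noncomputable section

/-- A Young function: a convex, left-continuous `Φ : [0,∞) → [0,∞]` with `Φ(0) = 0`
and `Φ(r) → ∞` as `r → ∞`. -/
structure YoungFunction where
  toFun : ℝ≥0 → ℝ≥0∞
  map_zero' : toFun 0 = 0
  convex' : ∀ (s t a b : ℝ≥0), a + b = 1 →
    toFun (a * s + b * t) ≤ (a : ℝ≥0∞) * toFun s + (b : ℝ≥0∞) * toFun t
  left_continuous' : ∀ s : ℝ≥0, 0 < s → toFun s = ⨆ (t : ℝ≥0) (_ : t < s), toFun t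
  tendsto_top' : Tendsto toFun atTop (nhds (⊤ : ℝ≥0∞))

namespace YoungFunction

/-- The generalized inverse `Φ⁻¹(s) = inf {r ≥ 0 : Φ(r) > s}` (with `inf ∅ = ∞`). -/
def inv (Φ : YoungFunction) (s : ℝ≥0∞) : ℝ≥0∞ :=
  sInf ((fun r : ℝ≥0 => (r : ℝ≥0∞)) '' {r : ℝ≥0 | s < Φ.toFun r})

/-- The canonical extension of `Φ` to `[0,∞]`. -/
def ext (Φ : YoungFunction) (s : ℝ≥0∞) : ℝ≥0∞ :=
  if s = ⊤ then ⊤ else Φ.toFun s.toNNReal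

/-- `Φ` is of lower type `p`: `Φ(st) ≤ C t^p Φ(s)` for all `t ∈ [0,1]`, `s ≥ 0`. -/
def IsLowerType (Φ : YoungFunction) (p : ℝ) : Prop :=
  ∃ C : ℝ, 0 < C ∧ ∀ (s t : ℝ≥0), t ≤ 1 →
    Φ.toFun (s * t) ≤ ENNReal.ofReal C * (t : ℝ≥0∞) ^ p * Φ.toFun s

/-- `Φ` is of upper type `p`: `Φ(st) ≤ C t^p Φ(s)` for all `t ≥ 1`, `s ≥ 0`. -/
def IsUpperType (Φ : YoungFunction) (p : ℝ) : Prop :=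
  ∃ C : ℝ, 0 < C ∧ ∀ (s t : ℝ≥0), 1 ≤ t →
    Φ.toFun (s * t) ≤ ENNReal.ofReal C * (t : ℝ≥0∞) ^ p * Φ.toFun s

end YoungFunction

variable {X : Type*} [MeasurableSpace X]

/-- The Luxemburg norm `‖g‖_{L_Φ(E)}` of an `[0,∞]`-valued function `g` on a set `E`. -/
def luxNormE (Φ : YoungFunction) (μ : Measure X) (E : Set X) (g : X → ℝ≥0∞) : ℝ≥0∞ :=
  sInf {lam : ℝ≥0∞ | 0 < lam ∧ ∫⁻ x in E, Φ.ext (g x / lam) ∂μ ≤ 1}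

/-- The Luxemburg norm `‖f‖_{L_Φ(E)}` of a real-valued function `f` on a set `E`. -/
def luxNorm (Φ : YoungFunction) (μ : Measure X) (E : Set X) (f : X → ℝ) : ℝ≥0∞ :=
  luxNormE Φ μ E fun x => (‖f x‖₊ : ℝ≥0∞)

/-- The weak Luxemburg norm `‖g‖_{WL_Φ(E)}`. -/
def wLuxNormE (Φ : YoungFunction) (μ : Measure X) (E : Set X) (g : X → ℝ≥0∞) : ℝ≥0∞ :=
  sInf {lam : ℝ≥0∞ | 0 < lam ∧
    ∀ t : ℝ≥0, 0 < t → Φ.toFun t * μ {x | x ∈ E ∧ (t : ℝ≥0∞) < g x / lam} ≤ 1}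

/-- The weak Luxemburg norm of a real-valued function. -/
def wLuxNorm (Φ : YoungFunction) (μ : Measure X) (E : Set X) (f : X → ℝ) : ℝ≥0∞ :=
  wLuxNormE Φ μ E fun x => (‖f x‖₊ : ℝ≥0∞)

/-- Euclidean space `ℝⁿ` with Lebesgue measure. -/
abbrev En (n : ℕ) := EuclideanSpace ℝ (Fin n)

/-- The fractional maximal operator
`M_α f(x) = sup_{t>0} |B(x,t)|^{α/n - 1} ∫_{B(x,t)} |f(y)| dy`. -/
def fracMaximal (n : ℕ) (α : ℝ) (f : En n → ℝ) (x : En n) : ℝ≥0∞ :=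
  ⨆ (t : ℝ) (_ : 0 < t),
    volume (ball x t) ^ (α / (n : ℝ) - 1) * ∫⁻ y in ball x t, (‖f y‖₊ : ℝ≥0∞)

/-- The commutator of the fractional maximal operator
`M_{b,α} f(x) = sup_{t>0} |B(x,t)|^{α/n - 1} ∫_{B(x,t)} |b(x)-b(y)||f(y)| dy`. -/
def commFracMaximal (n : ℕ) (α : ℝ) (b f : En n → ℝ) (x : En n) : ℝ≥0∞ :=
  ⨆ (t : ℝ) (_ : 0 < t),
    volume (ball x t) ^ (α / (n : ℝ) - 1) *
      ∫⁻ y in ball x t, (‖b x - b y‖₊ : ℝ≥0∞) * (‖f y‖₊ : ℝ≥0∞)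

/-- The Hardy–Littlewood maximal operator. -/
def hlMaximal (n : ℕ) (f : En n → ℝ) (x : En n) : ℝ≥0∞ :=
  ⨆ (t : ℝ) (_ : 0 < t),
    (volume (ball x t))⁻¹ * ∫⁻ y in ball x t, (‖f y‖₊ : ℝ≥0∞)

/-- The commutator of the Hardy–Littlewood maximal operator. -/
def commMaximal (n : ℕ) (b f : En n → ℝ) (x : En n) : ℝ≥0∞ :=
  ⨆ (t : ℝ) (_ : 0 < t),
    (volume (ball x t))⁻¹ * ∫⁻ y in ball x t, (‖b x - b y‖₊ : ℝ≥0∞) * (‖f y‖₊ : ℝ≥0∞)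

/-- The generalized Orlicz–Morrey norm `‖g‖_{M_{Φ,φ}}` (for `[0,∞]`-valued functions). -/
def morreyNormE (n : ℕ) (Φ : YoungFunction) (φ : En n → ℝ → ℝ) (g : En n → ℝ≥0∞) : ℝ≥0∞ :=
  ⨆ (x : En n) (r : ℝ) (_ : 0 < r),
    (ENNReal.ofReal (φ x r))⁻¹ * Φ.inv (ENNReal.ofReal r ^ (-(n : ℝ))) *
      luxNormE Φ volume (ball x r) g

/-- The generalized Orlicz–Morrey norm of a real-valued function. -/
def morreyNorm (n : ℕ) (Φ : YoungFunction) (φ : En n → ℝ → ℝ) (f : En n → ℝ) : ℝ≥0∞ :=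
  morreyNormE n Φ φ fun x => (‖f x‖₊ : ℝ≥0∞)

/-- The weak generalized Orlicz–Morrey norm `‖g‖_{WM_{Φ,φ}}`. -/
def wMorreyNormE (n : ℕ) (Φ : YoungFunction) (φ : En n → ℝ → ℝ) (g : En n → ℝ≥0∞) : ℝ≥0∞ :=
  ⨆ (x : En n) (r : ℝ) (_ : 0 < r),
    (ENNReal.ofReal (φ x r))⁻¹ * Φ.inv (ENNReal.ofReal r ^ (-(n : ℝ))) *
      wLuxNormE Φ volume (ball x r) g

/-- The Orlicz–Morrey norm `‖g‖_{M_{Φ,λ}}` with exponent `λ`. -/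
def morreyLamNormE (n : ℕ) (Φ : YoungFunction) (lam : ℝ) (g : En n → ℝ≥0∞) : ℝ≥0∞ :=
  ⨆ (x : En n) (r : ℝ) (_ : 0 < r),
    Φ.inv (ENNReal.ofReal r ^ (-lam)) * luxNormE Φ volume (ball x r) g

/-- The Orlicz–Morrey norm with exponent `λ` of a real-valued function. -/
def morreyLamNorm (n : ℕ) (Φ : YoungFunction) (lam : ℝ) (f : En n → ℝ) : ℝ≥0∞ :=
  morreyLamNormE n Φ lam fun x => (‖f x‖₊ : ℝ≥0∞)

/-- The average `f_{B(x,r)}` of `f` over the ball `B(x,r)`. -/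
def ballAvg (n : ℕ) (b : En n → ℝ) (x : En n) (r : ℝ) : ℝ :=
  ⨍ y in ball x r, b y

/-- The BMO seminorm `‖b‖_*`. -/
def bmoSeminorm (n : ℕ) (b : En n → ℝ) : ℝ≥0∞ :=
  ⨆ (x : En n) (r : ℝ) (_ : 0 < r),
    ENNReal.ofReal (⨍ y in ball x r, |b y - ballAvg n b x r|)

/-!
Split `f = f₁ + f₂` with `f₁ = f · 1_{B(x,2r)}`. For `y ∈ B(x,r)` a ball `B(y,t)` meets the
support of `f₂` only if `t > r`, and then `B(y,t) ⊆ B(x,2t)`, so `M_α f₂ (y)` is bounded by a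
constant times `S = sup_{t>2r} t^{α-n} ∫_{B(x,t)} |f|`. The global bound handles `M_α f₁`, since
`‖f₁‖_{L_Φ} = ‖f‖_{L_Φ(B(x,2r))}`. The weak Orlicz norm is a quasi-norm with constant `2`, and a
constant `c` on a ball `B` has weak norm at most `c / Ψ⁻¹(|B|⁻¹) ≲ c / Ψ⁻¹(r⁻ⁿ)`.
-/

namespace YoungFunction

variable (Φ : YoungFunction)

theorem mul_toFun_le_toFun_mul {k : ℝ≥0} (hk : 1 ≤ k) (t : ℝ≥0) :
    (k : ℝ≥0∞) * Φ.toFun t ≤ Φ.toFun (k * t) := by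
  have hk0 : k ≠ 0 := (zero_lt_one.trans_le hk).ne'
  have key := Φ.convex' (k * t) 0 k⁻¹ (1 - k⁻¹) (add_tsub_cancel_of_le (inv_le_one_of_one_le₀ hk))
  rw [mul_zero, add_zero, inv_mul_cancel_left₀ hk0, Φ.map_zero', mul_zero, add_zero] at key
  calc (k : ℝ≥0∞) * Φ.toFun t ≤ k * ((k⁻¹ : ℝ≥0) * Φ.toFun (k * t)) := by gcongr
    _ = Φ.toFun (k * t) := by
      rw [← mul_assoc, ← ENNReal.coe_mul, mul_inv_cancel₀ hk0, ENNReal.coe_one, one_mul]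

theorem inv_mono : Monotone Φ.inv :=
  fun _ _ h => sInf_le_sInf (Set.image_mono fun _ hr => h.trans_lt hr)

theorem toFun_le_of_lt_inv {s : ℝ≥0∞} {t : ℝ≥0} (ht : (t : ℝ≥0∞) < Φ.inv s) :
    Φ.toFun t ≤ s := by
  by_contra! h
  exact (sInf_le ⟨t, h, rfl⟩ : Φ.inv s ≤ t).not_gt ht

theorem inv_mul_le {k : ℝ≥0} (hk : 1 ≤ k) (s : ℝ≥0∞) :
    Φ.inv (k * s) ≤ k * Φ.inv s := by
  have hk0 : (k : ℝ≥0∞) ≠ 0 := by exact_mod_cast (zero_lt_one.trans_le hk).ne'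
  rw [mul_comm (k : ℝ≥0∞) (Φ.inv s), ← ENNReal.div_le_iff hk0 ENNReal.coe_ne_top]
  refine le_sInf ?_
  rintro _ ⟨u, hu, rfl⟩
  rw [ENNReal.div_le_iff hk0 ENNReal.coe_ne_top]
  refine sInf_le ⟨k * u, ?_, by push_cast; ring⟩
  calc (k : ℝ≥0∞) * s < k * Φ.toFun u := ENNReal.mul_lt_mul_right hk0 ENNReal.coe_ne_top hu
    _ ≤ Φ.toFun (k * u) := Φ.mul_toFun_le_toFun_mul hk u

theorem inv_inv_le_mul_inv_inv_mul (k : ℝ≥0) (s : ℝ≥0∞) :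
    (Φ.inv s)⁻¹ ≤ max k 1 * (Φ.inv (k * s))⁻¹ := by
  have hD : ((max k 1 : ℝ≥0) : ℝ≥0∞) ≠ 0 := by positivity
  have hle : Φ.inv (k * s) ≤ max k 1 * Φ.inv s :=
    (Φ.inv_mono (by gcongr; exact le_max_left _ _)).trans (Φ.inv_mul_le (le_max_right _ _) s)
  calc (Φ.inv s)⁻¹ = max k 1 * (max k 1 * Φ.inv s)⁻¹ := by
        rw [ENNReal.mul_inv (.inl hD) (.inl ENNReal.coe_ne_top), ← mul_assoc,
          ENNReal.mul_inv_cancel hD ENNReal.coe_ne_top, one_mul]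
    _ ≤ max k 1 * (Φ.inv (k * s))⁻¹ := by gcongr

end YoungFunction

theorem ENNReal.sInf_le_mul_sInf_add_sInf {S S₁ S₂ : Set ℝ≥0∞} {c : ℝ≥0∞}
    (hc0 : c ≠ 0) (hc : c ≠ ⊤) (h : ∀ a ∈ S₁, ∀ b ∈ S₂, c * (a + b) ∈ S) :
    sInf S ≤ c * (sInf S₁ + sInf S₂) :=
  calc sInf S ≤ ⨅ a ∈ S₁, ⨅ b ∈ S₂, c * (a + b) :=
        le_iInf₂ fun a ha => le_iInf₂ fun b hb => sInf_le (h a ha b hb)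
    _ = c * (sInf S₁ + sInf S₂) := by
        rw [ENNReal.sInf_add]
        simp only [sInf_eq_iInf, ENNReal.add_iInf, ENNReal.mul_iInf_of_ne hc0 hc]

section WeakLuxemburg

variable (Ψ : YoungFunction) (μ : Measure X)

theorem wLuxNormE_mono {E : Set X} {g h : X → ℝ≥0∞} (hgh : ∀ x ∈ E, g x ≤ h x) :
    wLuxNormE Ψ μ E g ≤ wLuxNormE Ψ μ E h := by
  refine sInf_le_sInf fun lam ⟨hlam, hbound⟩ => ⟨hlam, fun t ht => ?_⟩
  refine le_trans (mul_le_mul_right (measure_mono ?_) _) (hbound t ht)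
  exact fun x ⟨hxE, hx⟩ => ⟨hxE, hx.trans_le (ENNReal.div_le_div_right (hgh x hxE) _)⟩

theorem wLuxNormE_mono_set {E E' : Set X} (hE : E ⊆ E') (g : X → ℝ≥0∞) :
    wLuxNormE Ψ μ E g ≤ wLuxNormE Ψ μ E' g := by
  refine sInf_le_sInf fun lam ⟨hlam, hbound⟩ => ⟨hlam, fun t ht => ?_⟩
  refine le_trans (mul_le_mul_right (measure_mono ?_) _) (hbound t ht)
  exact fun x ⟨hxE, hx⟩ => ⟨hE hxE, hx⟩

theorem wLuxNormE_add_le (E : Set X) (g₁ g₂ : X → ℝ≥0∞) :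
    wLuxNormE Ψ μ E (g₁ + g₂) ≤ 2 * (wLuxNormE Ψ μ E g₁ + wLuxNormE Ψ μ E g₂) := by
  refine ENNReal.sInf_le_mul_sInf_add_sInf two_ne_zero ENNReal.ofNat_ne_top
    fun a ⟨ha0, ha⟩ b ⟨hb0, hb⟩ => ⟨by positivity, fun t ht => ?_⟩
  have h2t : 0 < 2 * t := by positivity
  have h2t0 : ((2 * t : ℝ≥0) : ℝ≥0∞) ≠ 0 := by positivity
  have hsub : {x | x ∈ E ∧ (t : ℝ≥0∞) < (g₁ + g₂) x / (2 * (a + b))} ⊆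
      {x | x ∈ E ∧ ((2 * t : ℝ≥0) : ℝ≥0∞) < g₁ x / a} ∪
        {x | x ∈ E ∧ ((2 * t : ℝ≥0) : ℝ≥0∞) < g₂ x / b} := by
    rintro x ⟨hxE, hx⟩
    by_contra hx'
    simp only [Set.mem_union, Set.mem_ofPred_eq, hxE, true_and, not_or, not_lt] at hx'
    refine hx.not_ge (ENNReal.div_le_of_le_mul ?_)
    calc g₁ x + g₂ x
        ≤ ((2 * t : ℝ≥0) : ℝ≥0∞) * a + ((2 * t : ℝ≥0) : ℝ≥0∞) * b :=
          add_le_add ((ENNReal.div_le_iff_le_mul (.inl ha0.ne') (.inr h2t0)).1 hx'.1)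
            ((ENNReal.div_le_iff_le_mul (.inl hb0.ne') (.inr h2t0)).1 hx'.2)
      _ = t * (2 * (a + b)) := by push_cast; ring
  -- the doubling `2 Ψ(t) ≤ Ψ(2t)` absorbs the factor `2` in `2 (a + b)`
  have hdouble : 2 * Ψ.toFun t ≤ Ψ.toFun (2 * t) := by
    exact_mod_cast Ψ.mul_toFun_le_toFun_mul one_le_two t
  refine (ENNReal.mul_le_mul_iff_right two_ne_zero ENNReal.ofNat_ne_top).1 ?_
  calc 2 * (Ψ.toFun t * μ {x | x ∈ E ∧ (t : ℝ≥0∞) < (g₁ + g₂) x / (2 * (a + b))})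
      ≤ 2 * Ψ.toFun t * (μ {x | x ∈ E ∧ ((2 * t : ℝ≥0) : ℝ≥0∞) < g₁ x / a} +
          μ {x | x ∈ E ∧ ((2 * t : ℝ≥0) : ℝ≥0∞) < g₂ x / b}) := by
        rw [← mul_assoc]; gcongr; exact (measure_mono hsub).trans (measure_union_le _ _)
    _ ≤ 1 + 1 := by
        grw [hdouble, mul_add]; exact add_le_add (ha _ h2t) (hb _ h2t)
    _ = 2 * 1 := by norm_num

theorem wLuxNormE_const_le {B : Set X} (hB0 : μ B ≠ 0) (hB : μ B ≠ ⊤) (c : ℝ≥0∞) :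
    wLuxNormE Ψ μ B (fun _ => c) ≤ c * (Ψ.inv (μ B)⁻¹)⁻¹ := by
  refine le_of_forall_gt_imp_ge_of_dense fun lam hlam =>
    sInf_le ⟨zero_le.trans_lt hlam, fun t _ => ?_⟩
  have hc : c / lam ≤ Ψ.inv (μ B)⁻¹ := by
    rcases eq_or_ne c 0 with rfl | hc0
    · simp
    rcases eq_or_ne (Ψ.inv (μ B)⁻¹) ⊤ with hI | hI
    · simp [hI]
    rw [← div_eq_mul_inv, ENNReal.div_lt_iff (.inr hc0) (.inl hI)] at hlam
    exact ENNReal.div_le_of_le_mul' hlam.le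
  by_cases ht : (t : ℝ≥0∞) < c / lam
  · calc Ψ.toFun t * μ {x | x ∈ B ∧ (t : ℝ≥0∞) < c / lam} ≤ (μ B)⁻¹ * μ B :=
          mul_le_mul' (Ψ.toFun_le_of_lt_inv (ht.trans_le hc)) (measure_mono fun _ hx => hx.1)
      _ = 1 := ENNReal.inv_mul_cancel hB0 hB
  · simp [ht]

end WeakLuxemburg

theorem luxNorm_univ_indicator (Φ : YoungFunction) (μ : Measure X) {s : Set X}
    (hs : MeasurableSet s) (f : X → ℝ) :
    luxNorm Φ μ univ (s.indicator f) = luxNorm Φ μ s f := by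
  have hint (lam : ℝ≥0∞) : ∫⁻ x in univ, Φ.ext (‖s.indicator f x‖₊ / lam) ∂μ =
      ∫⁻ x in s, Φ.ext (‖f x‖₊ / lam) ∂μ := by
    rw [Measure.restrict_univ, ← lintegral_indicator hs]
    refine lintegral_congr fun x => ?_
    by_cases hx : x ∈ s <;> simp [hx, YoungFunction.ext, Φ.map_zero']
  simp only [luxNorm, luxNormE, hint]

section AddHaarBall

variable {E : Type*} [NormedAddCommGroup E] [NormedSpace ℝ E] [MeasurableSpace E] [BorelSpace E]
  [FiniteDimensional ℝ E] (μ : Measure E) [μ.IsAddHaarMeasure]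

theorem addHaar_ball_rpow (x : E) {t : ℝ} (ht : 0 < t) (p : ℝ) :
    μ (ball x t) ^ p = ENNReal.ofReal t ^ (Module.finrank ℝ E * p) * μ (ball 0 1) ^ p := by
  rw [Measure.addHaar_ball_of_pos μ x ht,
    ENNReal.mul_rpow_of_ne_top ENNReal.ofReal_ne_top measure_ball_lt_top.ne,
    ENNReal.ofReal_pow ht.le, ← ENNReal.rpow_natCast, ← ENNReal.rpow_mul]

theorem inv_inv_addHaar_ball_le (Ψ : YoungFunction) :
    ∃ D : ℝ≥0, ∀ (x : E) {r : ℝ}, 0 < r →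
      (Ψ.inv (μ (ball x r))⁻¹)⁻¹ ≤
        D * (Ψ.inv (ENNReal.ofReal r ^ (-(Module.finrank ℝ E : ℝ))))⁻¹ := by
  set V := μ (ball 0 1)
  refine ⟨max V.toNNReal 1, fun x r hr => ?_⟩
  convert Ψ.inv_inv_le_mul_inv_inv_mul V.toNNReal (μ (ball x r))⁻¹ using 4
  rw [← ENNReal.rpow_neg_one, addHaar_ball_rpow μ x hr,
    ENNReal.coe_toNNReal measure_ball_lt_top.ne, mul_left_comm, ENNReal.rpow_neg_one,
    ENNReal.mul_inv_cancel (measure_ball_pos μ 0 one_pos).ne' measure_ball_lt_top.ne, mul_one,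
    mul_neg_one]

end AddHaarBall

section FracMaximal

variable {n : ℕ} (α : ℝ) (f : En n → ℝ)

theorem volume_ball_rpow_div_sub_one (hn : n ≠ 0) (y : En n) {t : ℝ} (ht : 0 < t) :
    volume (ball y t) ^ (α / n - 1) =
      ENNReal.ofReal t ^ (α - n) * volume (ball (0 : En n) 1) ^ (α / n - 1) := by
  rw [addHaar_ball_rpow volume y ht, finrank_euclideanSpace_fin, mul_sub, mul_div_cancel₀ _
    (Nat.cast_ne_zero.2 hn), mul_one]

theorem volume_ball_rpow_mul_lintegral_sdiff_le (hn : n ≠ 0) {x y : En n} {r t : ℝ}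
    (hy : y ∈ ball x r) (ht : 0 < t) :
    volume (ball y t) ^ (α / n - 1) *
        ∫⁻ z in ball y t \ ball x (2 * r), (‖f z‖₊ : ℝ≥0∞) ≤
      volume (ball (0 : En n) 1) ^ (α / n - 1) * 2 ^ ((n : ℝ) - α) *
        ⨆ (s : ℝ) (_ : 2 * r < s),
          ENNReal.ofReal s ^ (α - n) * ∫⁻ z in ball x s, (‖f z‖₊ : ℝ≥0∞) := by
  have hyx := mem_ball.1 hy
  rcases le_or_gt t r with htr | hrt
  · have hempty : ball y t \ ball x (2 * r) = ∅ :=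
      sdiff_eq_empty.2 (ball_subset_ball' (by linarith))
    simp [hempty]
  have hscale : ENNReal.ofReal t ^ (α - n) =
      2 ^ ((n : ℝ) - α) * ENNReal.ofReal (2 * t) ^ (α - n) := by
    rw [ENNReal.ofReal_mul zero_le_two, ENNReal.ofReal_ofNat,
      ENNReal.mul_rpow_of_ne_top ENNReal.ofNat_ne_top ENNReal.ofReal_ne_top, ← mul_assoc,
      ← ENNReal.rpow_add _ _ two_ne_zero ENNReal.ofNat_ne_top, sub_add_sub_cancel, sub_self,
      ENNReal.rpow_zero, one_mul]
  calc _ ≤ volume (ball y t) ^ (α / n - 1) *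
          ∫⁻ z in ball x (2 * t), (‖f z‖₊ : ℝ≥0∞) := by
        gcongr
        exact sdiff_subset.trans (ball_subset_ball' (by linarith))
    _ = volume (ball (0 : En n) 1) ^ (α / n - 1) * 2 ^ ((n : ℝ) - α) *
          (ENNReal.ofReal (2 * t) ^ (α - n) *
            ∫⁻ z in ball x (2 * t), (‖f z‖₊ : ℝ≥0∞)) := by
        rw [volume_ball_rpow_div_sub_one α hn y ht, hscale]; ring
    _ ≤ _ := by
        gcongr
        exact le_iSup₂_of_le (2 * t) (by linarith) le_rfl

theorem fracMaximal_le_indicator_add (hn : n ≠ 0) {x y : En n} {r : ℝ} (hy : y ∈ ball x r) :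
    fracMaximal n α f y ≤ fracMaximal n α ((ball x (2 * r)).indicator f) y +
      volume (ball (0 : En n) 1) ^ (α / n - 1) * 2 ^ ((n : ℝ) - α) *
        ⨆ (s : ℝ) (_ : 2 * r < s),
          ENNReal.ofReal s ^ (α - n) * ∫⁻ z in ball x s, (‖f z‖₊ : ℝ≥0∞) := by
  refine iSup₂_le fun t ht => ?_
  have hsplit : ∫⁻ z in ball y t, (‖f z‖₊ : ℝ≥0∞) =
      (∫⁻ z in ball y t, (‖(ball x (2 * r)).indicator f z‖₊ : ℝ≥0∞)) +
        ∫⁻ z in ball y t \ ball x (2 * r), (‖f z‖₊ : ℝ≥0∞) := by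
    rw [← lintegral_inter_add_sdiff _ (ball y t) (measurableSet_ball (x := x) (ε := 2 * r)),
      inter_comm, ← setLIntegral_indicator measurableSet_ball]
    simp only [nnnorm_indicator_eq_indicator_nnnorm, ENNReal.coe_indicator]
  rw [hsplit, mul_add]
  exact add_le_add (le_iSup₂ (f := fun t (_ : 0 < t) => volume (ball y t) ^ (α / n - 1) *
      ∫⁻ z in ball y t, (‖(ball x (2 * r)).indicator f z‖₊ : ℝ≥0∞)) t ht)
    (volume_ball_rpow_mul_lintegral_sdiff_le α f hn hy ht)

end FracMaximal

/-- If `M_α` is bounded from `L_Φ(ℝⁿ)` to `WL_Ψ(ℝⁿ)`, then the local weak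
estimate `‖M_α f‖_{WL_Ψ(B(x,r))} ≲ ‖f‖_{L_Φ(B(x,2r))} + Ψ⁻¹(r⁻ⁿ)⁻¹ sup_{t>2r} t^{α-n} ∫_{B(x,t)}|f|`
holds. -/
theorem fracMaximal_local_weak_estimate
    (n : ℕ) (α : ℝ) (hα0 : 0 ≤ α) (hαn : α < n) (Φ Ψ : YoungFunction)
    (A : ℝ) (hA : 0 < A)
    (hbdd : ∀ g : En n → ℝ,
      wLuxNormE Ψ volume Set.univ (fracMaximal n α g) ≤
        ENNReal.ofReal A * luxNorm Φ volume Set.univ g) :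
    ∃ C : ℝ, 0 < C ∧ ∀ (x : En n) (r : ℝ), 0 < r → ∀ f : En n → ℝ,
      LocallyIntegrable f volume →
      wLuxNormE Ψ volume (ball x r) (fracMaximal n α f) ≤
        ENNReal.ofReal C *
          (luxNorm Φ volume (ball x (2 * r)) f +
            (Ψ.inv (ENNReal.ofReal r ^ (-(n : ℝ))))⁻¹ *
              ⨆ (t : ℝ) (_ : 2 * r < t),
                ENNReal.ofReal t ^ (α - (n : ℝ)) *
                  ∫⁻ z in ball x t, (‖f z‖₊ : ℝ≥0∞)) := by
  have hn : n ≠ 0 := by rintro rfl; norm_num at hαn; linarith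
  set K := volume (ball (0 : En n) 1) ^ (α / n - 1) * (2 : ℝ≥0∞) ^ ((n : ℝ) - α)
  have hK : K ≠ ⊤ := ENNReal.mul_ne_top
    (ENNReal.rpow_ne_top_of_ne_zero (measure_ball_pos _ _ one_pos).ne' measure_ball_lt_top.ne)
    (ENNReal.rpow_ne_top_of_nonneg (by linarith) ENNReal.ofNat_ne_top)
  obtain ⟨D, hD⟩ := inv_inv_addHaar_ball_le (volume : Measure (En n)) Ψ
  rw [finrank_euclideanSpace_fin] at hD
  refine ⟨2 * A + (2 * K * D).toReal, by positivity, fun x r hr f _ => ?_⟩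
  set S := ⨆ (t : ℝ) (_ : 2 * r < t),
    ENNReal.ofReal t ^ (α - (n : ℝ)) * ∫⁻ z in ball x t, (‖f z‖₊ : ℝ≥0∞)
  set f₁ := (ball x (2 * r)).indicator f
  set L := luxNorm Φ volume (ball x (2 * r)) f
  set J := (Ψ.inv (ENNReal.ofReal r ^ (-(n : ℝ))))⁻¹
  calc wLuxNormE Ψ volume (ball x r) (fracMaximal n α f)
      ≤ wLuxNormE Ψ volume (ball x r) (fracMaximal n α f₁ + fun _ => K * S) :=
        wLuxNormE_mono _ _ fun y hy => fracMaximal_le_indicator_add α f hn hy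
    _ ≤ 2 * (wLuxNormE Ψ volume (ball x r) (fracMaximal n α f₁) +
          wLuxNormE Ψ volume (ball x r) fun _ => K * S) := wLuxNormE_add_le _ _ _ _ _
    _ ≤ 2 * (ENNReal.ofReal A * L + K * S * (D * J)) := by
        gcongr
        · exact (wLuxNormE_mono_set _ _ (subset_univ _) _).trans <| (hbdd f₁).trans_eq <|
            congrArg _ (luxNorm_univ_indicator Φ volume measurableSet_ball f)
        · refine (wLuxNormE_const_le _ _ (measure_ball_pos _ _ hr).ne'
            measure_ball_lt_top.ne _).trans ?_
          gcongr
          exact hD x hr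
    _ ≤ (2 * ENNReal.ofReal A + 2 * K * D) * L +
          (2 * ENNReal.ofReal A + 2 * K * D) * (J * S) := by
        rw [show 2 * (ENNReal.ofReal A * L + K * S * (D * J)) =
          2 * ENNReal.ofReal A * L + 2 * K * D * (J * S) by ring]
        exact add_le_add (by gcongr; exact le_self_add) (by gcongr; exact le_add_self)
    _ = ENNReal.ofReal (2 * A + (2 * K * D).toReal) * (L + J * S) := by
        rw [← mul_add, ENNReal.ofReal_add (by positivity) ENNReal.toReal_nonneg,
          ENNReal.ofReal_mul zero_le_two, ENNReal.ofReal_ofNat,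
          ENNReal.ofReal_toReal (by finiteness)]
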